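/- arXiv:2602.05315 — 2 statements merged into one kernel-verified Lean document; each statement's English description precedes it below -/
import Mathlib

section
/- In any finite binary tree, if N is a set of nodes, then the LCA-closure of N, defined as N together with all pairwise lowest common ancestors of elements of N, has cardinality at most 2·|N| − 1 (when N is nonempty). -/
/-!
Add the nodes of `N` one at a time. All LCAs `x ⊓ n` of a new node `x` with old nodes `n` are
ancestors of `x`, hence lie on a chain; let `x ⊓ n₀` be the deepest of them. For any other `n`,
both `x ⊓ n₀` and `n₀ ⊓ n` are ancestors of `n₀`, and comparing them shows that `x ⊓ n` is
either `x ⊓ n₀` or the old LCA `n₀ ⊓ n`. So each new node enlarges the closure by at most two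
elements, `x` and `x ⊓ n₀`.
-/

namespace Finset

variable {α : Type*} [SemilatticeInf α]

section LcaClosure

variable [DecidableEq α]

def lcaClosure (N : Finset α) : Finset α :=
  N ∪ (N ×ˢ N).image (fun p => p.1 ⊓ p.2)

@[simp]
theorem mem_lcaClosure {N : Finset α} {y : α} :
    y ∈ N.lcaClosure ↔ y ∈ N ∨ ∃ a ∈ N, ∃ b ∈ N, a ⊓ b = y := by
  simp [lcaClosure, and_assoc]

theorem lcaClosure_insert (x : α) (s : Finset α) :
    (insert x s).lcaClosure = insert x (s.lcaClosure ∪ s.image (x ⊓ ·)) := by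
  ext y
  simp only [mem_lcaClosure, mem_insert, mem_union, mem_image]
  grind [inf_comm, inf_idem]

end LcaClosure

theorem exists_forall_inf_le_inf (htree : ∀ a b c : α, a ≤ c → b ≤ c → a ≤ b ∨ b ≤ a)
    (x : α) {s : Finset α} (hs : s.Nonempty) :
    ∃ n₀ ∈ s, ∀ n ∈ s, x ⊓ n ≤ x ⊓ n₀ := by
  obtain ⟨n₀, hn₀, hmax⟩ := s.exists_maximalFor (x ⊓ ·) hs
  refine ⟨n₀, hn₀, fun n hn => ?_⟩
  rcases htree (x ⊓ n) (x ⊓ n₀) x inf_le_left inf_le_left with h | h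
  · exact h
  · exact hmax hn h

theorem exists_forall_inf_eq_or_inf_eq (htree : ∀ a b c : α, a ≤ c → b ≤ c → a ≤ b ∨ b ≤ a)
    (x : α) {s : Finset α} (hs : s.Nonempty) :
    ∃ n₀ ∈ s, ∀ n ∈ s, x ⊓ n = x ⊓ n₀ ∨ x ⊓ n = n₀ ⊓ n := by
  obtain ⟨n₀, hn₀, hmax⟩ := exists_forall_inf_le_inf htree x hs
  refine ⟨n₀, hn₀, fun n hn => ?_⟩
  have hle : x ⊓ n ≤ n₀ ⊓ n := le_inf ((hmax n hn).trans inf_le_right) inf_le_right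
  rcases htree (x ⊓ n₀) (n₀ ⊓ n) n₀ inf_le_right inf_le_left with h | h
  · exact Or.inl ((hmax n hn).antisymm (le_inf inf_le_left (h.trans inf_le_right)))
  · exact Or.inr (hle.antisymm (le_inf (h.trans inf_le_left) inf_le_right))

theorem card_lcaClosure_insert_le [DecidableEq α]
    (htree : ∀ a b c : α, a ≤ c → b ≤ c → a ≤ b ∨ b ≤ a)
    (x : α) {s : Finset α} (hs : s.Nonempty) :
    (insert x s).lcaClosure.card ≤ s.lcaClosure.card + 2 := by
  obtain ⟨n₀, hn₀, hcases⟩ := exists_forall_inf_eq_or_inf_eq htree x hs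
  have hsub : s.lcaClosure ∪ s.image (x ⊓ ·) ⊆ insert (x ⊓ n₀) s.lcaClosure := by
    refine union_subset (subset_insert _ _) fun y hy => ?_
    obtain ⟨n, hn, rfl⟩ := mem_image.1 hy
    rcases hcases n hn with h | h
    · exact h ▸ mem_insert_self _ _
    · exact mem_insert_of_mem (mem_lcaClosure.2 (Or.inr ⟨n₀, hn₀, n, hn, h.symm⟩))
  calc (insert x s).lcaClosure.card
      ≤ (s.lcaClosure ∪ s.image (x ⊓ ·)).card + 1 := by
        rw [lcaClosure_insert]
        exact card_insert_le _ _
    _ ≤ (insert (x ⊓ n₀) s.lcaClosure).card + 1 := by gcongr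
    _ ≤ s.lcaClosure.card + 2 := by linarith [card_insert_le (x ⊓ n₀) s.lcaClosure]

end Finset

-- A tree is modelled as a meet-semilattice under the ancestor order in which the ancestors of
-- any node form a chain; `⊓` is then the lowest common ancestor.
theorem lca_closure_card_le_general {α : Type*} [SemilatticeInf α] [DecidableEq α]
    (htree : ∀ a b c : α, a ≤ c → b ≤ c → (a ≤ b ∨ b ≤ a))
    (N : Finset α) :
    (N ∪ (N ×ˢ N).image (fun p => p.1 ⊓ p.2)).card ≤ 2 * N.card - 1 := by
  change N.lcaClosure.card ≤ _
  induction N using Finset.induction_on with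
  | empty => simp [Finset.lcaClosure]
  | insert x s hx IH =>
    rw [Finset.card_insert_of_notMem hx]
    rcases s.eq_empty_or_nonempty with rfl | hs
    · simp [Finset.lcaClosure]
    · have hstep := Finset.card_lcaClosure_insert_le htree x hs
      have hs_pos := hs.card_pos
      omega

/-- In a finite tree (modelled as a finite meet-semilattice under the
ancestor order, in which the set of ancestors of any node is totally
ordered, so that `⊓` is the lowest common ancestor), the LCA-closure
`N ∪ {lca a b : a, b ∈ N}` of a nonempty node set `N` has cardinality at
most `2·|N| − 1`. -/
theorem lca_closure_card_le {α : Type*} [SemilatticeInf α] [Fintype α] [DecidableEq α]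
    (htree : ∀ a b c : α, a ≤ c → b ≤ c → (a ≤ b ∨ b ≤ a))
    (N : Finset α) (hN : N.Nonempty) :
    (N ∪ (N ×ˢ N).image (fun p => p.1 ⊓ p.2)).card ≤ 2 * N.card - 1 :=
  lca_closure_card_le_general htree N
end

section
/- Define a 1-dimensional grammar with nonterminals X_1, ..., X_k where X_1 has rules X_1 → (−1) X_1 (+2) and X_1 → 0, and for i ≥ 2, X_i has rules X_i → (−1) X_i X_{i−1} and X_i → (+1). Then starting from counter value n, the maximal value derivable by X_i (as the total displacement added, keeping the counter nonnegative throughout a left-to-right reading) is F_i(n), where F_1(n) = 2n and F_i(n) = F_{i−1}^[n](1). In particular the reachability set of this k-indexed grammar from input n has values as large as F_k(n) (Ackermannian in k). -/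
/-- The fast-growing hierarchy: `F 1 n = 2n`, and for `d > 1`,
`F d n = (F (d-1))^[n] 1`. -/
def fastGrowing : ℕ → ℕ → ℕ
  | 0 => fun n => n
  | 1 => fun n => 2 * n
  | (d + 2) => fun n => (fastGrowing (d + 1))^[n] 1

/-- The value function computed by the nonterminals of the grammar
`X_1 → (−1) X_1 (+2)`, `X_1 → 0`, and `X_i → (−1) X_i X_{i−1}`,
`X_i → (+1)` for `i ≥ 2`, under the optimal derivation strategy keeping
the counter nonnegative:

* `X_1` from counter `n` applies its cycle `m ≤ n` times, reaching `n + m`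
  (optimally `2n`);
* `X_i` from counter `n` applies its cycle `m ≤ n` times, paying `m` tokens,
  producing `+1` and then `m` copies of `X_{i−1}`, so the optimal value is
  the maximum over `m ≤ n` of `(gVal (i−1))^[m] (n − m + 1)`. -/
def gVal : ℕ → ℕ → ℕ
  | 0 => fun n => n
  | 1 => fun n => Finset.sup (Finset.range (n + 1)) (fun m => n + m)
  | (i + 2) => fun n =>
      Finset.sup (Finset.range (n + 1)) (fun m => (gVal (i + 1))^[m] (n - m + 1))

/-!
Each `F_{d+1}` is monotone and pushes every `x ≥ 1` strictly up, so `F_{d+1}^[j] 1 ≥ j + 1`.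
Hence in the maximum defining `gVal (d + 2) n`, spending `m` tokens on cycles starts the
`m` iterations from `n - m + 1 ≤ F_{d+1}^[n - m] 1`, which is never better than `m = n`:
the maximum is `F_{d+1}^[n] 1 = F_{d+2} n`.
-/

namespace Finset

theorem sup_eq_of_mem_of_forall_le {α β : Type*} [SemilatticeSup β] [OrderBot β]
    {s : Finset α} {f : α → β} {a : α} (ha : a ∈ s) (h : ∀ b ∈ s, f b ≤ f a) :
    s.sup f = f a :=
  le_antisymm (Finset.sup_le h) (Finset.le_sup ha)

end Finset

section Iterate

variable {f : ℕ → ℕ}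

theorem succ_le_iterate_one (hf : ∀ x, 1 ≤ x → x + 1 ≤ f x) (j : ℕ) : j + 1 ≤ f^[j] 1 := by
  induction j with
  | zero => simp
  | succ j ih =>
    rw [Function.iterate_succ_apply']
    exact (Nat.succ_le_succ ih).trans (hf _ (by omega))

theorem monotone_iterate_one (hf : ∀ x, 1 ≤ x → x + 1 ≤ f x) :
    Monotone fun n => f^[n] 1 :=
  monotone_nat_of_le_succ fun n => by
    rw [Function.iterate_succ_apply']
    exact (Nat.le_succ _).trans (hf _ ((Nat.le_add_left 1 n).trans (succ_le_iterate_one hf n)))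

theorem iterate_sub_add_one_le_iterate_one (hmono : Monotone f)
    (hf : ∀ x, 1 ≤ x → x + 1 ≤ f x) {m n : ℕ} (hmn : m ≤ n) :
    f^[m] (n - m + 1) ≤ f^[n] 1 :=
  calc f^[m] (n - m + 1) ≤ f^[m] (f^[n - m] 1) := hmono.iterate m (succ_le_iterate_one hf _)
    _ = f^[n] 1 := by rw [← Function.iterate_add_apply, Nat.add_sub_cancel' hmn]

end Iterate

theorem monotone_fastGrowing_succ_and_succ_le (d : ℕ) :
    Monotone (fastGrowing (d + 1)) ∧ ∀ x, 1 ≤ x → x + 1 ≤ fastGrowing (d + 1) x := by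
  induction d with
  | zero => exact ⟨fun a b hab => by simp only [fastGrowing]; omega,
      fun x hx => by simp only [fastGrowing]; omega⟩
  | succ d ih => exact ⟨monotone_iterate_one ih.2, fun x _ => succ_le_iterate_one ih.2 x⟩

theorem gVal_one (n : ℕ) : gVal 1 n = 2 * n := by
  change (Finset.range (n + 1)).sup (fun m => n + m) = 2 * n
  rw [Finset.sup_eq_of_mem_of_forall_le (Finset.self_mem_range_succ n)
    fun m hm => by simp only [Finset.mem_range] at hm; omega]
  ring

/-- The maximal value derivable by nonterminal `X_i` from counter value `n`
equals the fast-growing function `F_i(n)`; in particular the reachability set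
of this `k`-indexed one-dimensional grammar from input `n` contains values as
large as `F_k(n)`. -/
theorem grammar_value_eq_fastGrowing :
    ∀ i : ℕ, 1 ≤ i → ∀ n : ℕ, gVal i n = fastGrowing i n := by
  intro i hi
  obtain ⟨d, rfl⟩ : ∃ d, i = d + 1 := ⟨i - 1, by omega⟩
  induction d with
  | zero => exact gVal_one
  | succ d ih =>
    intro n
    have hval : gVal (d + 1) = fastGrowing (d + 1) := funext (ih (by omega))
    obtain ⟨hmono, hsucc⟩ := monotone_fastGrowing_succ_and_succ_le d
    change (Finset.range (n + 1)).sup (fun m => (gVal (d + 1))^[m] (n - m + 1))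
      = (fastGrowing (d + 1))^[n] 1
    rw [hval, Finset.sup_eq_of_mem_of_forall_le (Finset.self_mem_range_succ n)
      fun m hm => (iterate_sub_add_one_le_iterate_one hmono hsucc
        (Nat.le_of_lt_succ (Finset.mem_range.mp hm))).trans_eq (by rw [Nat.sub_self]),
      Nat.sub_self]
end
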